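/- arXiv:1611.04219 — 3 statements merged into one kernel-verified Lean document; each statement's English description precedes it below -/
import Mathlib

section
/- Let M = [[L1, L2],[L2^T, L3]] be a real symmetric block matrix with L1 nonsingular, and let S = L3 - L2^T L1^{-1} L2. Then the block matrix X with (1,1)-block L1^{-1} + L1^{-1} L2 S^# L2^T L1^{-1}, (1,2)-block -L1^{-1} L2 S^#, (2,1)-block -S^# L2^T L1^{-1}, and (2,2)-block S^# is a symmetric {1}-inverse of M, i.e., M X M = M and X^T = X. -/
/-!
With `S = L3 - L2ᵀ L1⁻¹ L2`, the Schur factorization writes `M = P · diag(L1, S) · Q` with block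
unitriangular `P`, `Q`, and `X = Q⁻¹ · diag(L1⁻¹, S^#) · P⁻¹`. Hence
`M X M = P · diag(L1 L1⁻¹ L1, S S^# S) · Q = M`. Symmetry of `X` reduces to symmetry of `S^#`:
`(S^#)ᵀ` is again a group inverse of the symmetric `S`, and group inverses are unique.
-/

open Matrix

def IsGroupInverse {R : Type*} [Mul R] (s x : R) : Prop :=
  s * x * s = s ∧ x * s * x = x ∧ s * x = x * s

theorem IsGroupInverse.eq {R : Type*} [Semigroup R] {s x y : R}
    (hx : IsGroupInverse s x) (hy : IsGroupInverse s y) : x = y := by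
  obtain ⟨hx₁, hx₂, hx₃⟩ := hx
  obtain ⟨hy₁, hy₂, hy₃⟩ := hy
  have hsx : s * x = s * y :=
    calc s * x = x * (s * y * s) := by rw [hy₁, hx₃]
      _ = x * s * (y * s) := by simp only [mul_assoc]
      _ = s * y := by rw [← hx₃, ← hy₃, ← mul_assoc, hx₁]
  calc x = s * y * x := by rw [← hsx, hx₃, hx₂]
    _ = y := by rw [hy₃, mul_assoc, hsx, ← mul_assoc, hy₂]

theorem IsGroupInverse.transpose {n α : Type*} [Fintype n] [CommSemiring α]
    {S X : Matrix n n α} (h : IsGroupInverse S X) : IsGroupInverse Sᵀ Xᵀ := by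
  obtain ⟨h₁, h₂, h₃⟩ := h
  refine ⟨?_, ?_, ?_⟩
  · rw [← transpose_mul, ← transpose_mul, ← Matrix.mul_assoc, h₁]
  · rw [← transpose_mul, ← transpose_mul, ← Matrix.mul_assoc, h₂]
  · rw [← transpose_mul, ← transpose_mul, h₃]

theorem IsGroupInverse.transpose_eq_self {n α : Type*} [Fintype n] [CommSemiring α]
    {S X : Matrix n n α} (h : IsGroupInverse S X) (hS : Sᵀ = S) : Xᵀ = X :=
  (hS ▸ h.transpose).eq h

theorem mul_mul_mul_eq_of_eq_mul_mul {M : Type*} [Monoid M] {a p d q p' d' q' : M}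
    (ha : a = p * d * q) (hp : p' * p = 1) (hq : q * q' = 1) (hd : d * d' * d = d) :
    a * (q' * d' * p') * a = a := by
  calc a * (q' * d' * p') * a = p * (d * (q * q') * d' * (p' * p) * d) * q := by
        rw [ha]; simp only [mul_assoc]
    _ = a := by rw [hq, hp, mul_one, mul_one, hd, ha, mul_assoc]

section Blocks

variable {n m α : Type*} [Fintype n] [Fintype m] [Ring α]

theorem fromBlocks_upper_unitriangular_mul_neg [DecidableEq n] [DecidableEq m]
    (B : Matrix n m α) :
    fromBlocks (1 : Matrix n n α) B 0 (1 : Matrix m m α) * fromBlocks 1 (-B) 0 1 = 1 := by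
  simp [fromBlocks_multiply]

theorem fromBlocks_lower_unitriangular_neg_mul [DecidableEq n] [DecidableEq m]
    (C : Matrix m n α) :
    fromBlocks (1 : Matrix n n α) 0 (-C) (1 : Matrix m m α) * fromBlocks 1 0 C 1 = 1 := by
  simp [fromBlocks_multiply]

theorem fromBlocks_diag_mul_mul (A A' : Matrix n n α) (D D' : Matrix m m α) :
    fromBlocks A 0 0 D * fromBlocks A' 0 0 D' * fromBlocks A 0 0 D =
      fromBlocks (A * A' * A) 0 0 (D * D' * D) := by
  simp [fromBlocks_multiply]

end Blocks

section SchurComplement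

variable {n m α : Type*} [Fintype n] [Fintype m] [CommRing α]

/-- `A'` stands for `A⁻¹` and `D'` for a `{1}`-inverse of the Schur complement `D - C A⁻¹ B`. -/
def schurBlockInverse (A' : Matrix n n α) (B : Matrix n m α) (C : Matrix m n α)
    (D' : Matrix m m α) : Matrix (n ⊕ m) (n ⊕ m) α :=
  fromBlocks (A' + A' * B * D' * C * A') (-(A' * B * D')) (-(D' * C * A')) D'

theorem schurBlockInverse_eq_mul [DecidableEq n] [DecidableEq m] (A' : Matrix n n α)
    (B : Matrix n m α) (C : Matrix m n α) (D' : Matrix m m α) :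
    schurBlockInverse A' B C D' =
      fromBlocks 1 (-(A' * B)) 0 1 * fromBlocks A' 0 0 D' * fromBlocks 1 0 (-(C * A')) 1 := by
  simp [schurBlockInverse, fromBlocks_multiply, Matrix.mul_assoc]

theorem transpose_schurBlockInverse (A' : Matrix n n α) (B : Matrix n m α) (D' : Matrix m m α)
    (hA' : A'ᵀ = A') (hD' : D'ᵀ = D') :
    (schurBlockInverse A' B Bᵀ D')ᵀ = schurBlockInverse A' B Bᵀ D' := by
  simp only [schurBlockInverse, fromBlocks_transpose, transpose_add, transpose_neg,
    transpose_mul, transpose_transpose, hA', hD', Matrix.mul_assoc]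

theorem fromBlocks_mul_schurBlockInverse_mul [DecidableEq n] [DecidableEq m]
    (A : Matrix n n α) (B : Matrix n m α) (C : Matrix m n α) (D : Matrix m m α)
    (hA : IsUnit A.det) (D' : Matrix m m α)
    (hD' : (D - C * A⁻¹ * B) * D' * (D - C * A⁻¹ * B) = D - C * A⁻¹ * B) :
    fromBlocks A B C D * schurBlockInverse A⁻¹ B C D' * fromBlocks A B C D =
      fromBlocks A B C D := by
  let := invertibleOfIsUnitDet A hA
  have hfactor := fromBlocks_eq_of_invertible₁₁ A B C D
  rw [invOf_eq_nonsing_inv] at hfactor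
  rw [schurBlockInverse_eq_mul]
  refine mul_mul_mul_eq_of_eq_mul_mul hfactor (fromBlocks_lower_unitriangular_neg_mul _)
    (fromBlocks_upper_unitriangular_mul_neg _) ?_
  rw [fromBlocks_diag_mul_mul, mul_nonsing_inv _ hA, Matrix.one_mul, hD']

end SchurComplement

theorem stmt5_general {n m : Type*} [Fintype n] [Fintype m] [DecidableEq n]
    (L1 : Matrix n n ℝ) (L2 : Matrix n m ℝ) (L3 : Matrix m m ℝ)
    (hL1 : L1ᵀ = L1) (hL3 : L3ᵀ = L3) (hL1inv : IsUnit L1.det)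
    (Sp : Matrix m m ℝ)
    (hSp : (L3 - L2ᵀ * L1⁻¹ * L2) * Sp * (L3 - L2ᵀ * L1⁻¹ * L2) = L3 - L2ᵀ * L1⁻¹ * L2 ∧
      Sp * (L3 - L2ᵀ * L1⁻¹ * L2) * Sp = Sp ∧
      (L3 - L2ᵀ * L1⁻¹ * L2) * Sp = Sp * (L3 - L2ᵀ * L1⁻¹ * L2)) :
    (Matrix.fromBlocks
        (L1⁻¹ + L1⁻¹ * L2 * Sp * L2ᵀ * L1⁻¹) (-(L1⁻¹ * L2 * Sp))
        (-(Sp * L2ᵀ * L1⁻¹)) Sp)ᵀ =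
      Matrix.fromBlocks
        (L1⁻¹ + L1⁻¹ * L2 * Sp * L2ᵀ * L1⁻¹) (-(L1⁻¹ * L2 * Sp))
        (-(Sp * L2ᵀ * L1⁻¹)) Sp ∧
    Matrix.fromBlocks L1 L2 L2ᵀ L3 *
        Matrix.fromBlocks
          (L1⁻¹ + L1⁻¹ * L2 * Sp * L2ᵀ * L1⁻¹) (-(L1⁻¹ * L2 * Sp))
          (-(Sp * L2ᵀ * L1⁻¹)) Sp *
        Matrix.fromBlocks L1 L2 L2ᵀ L3 =
      Matrix.fromBlocks L1 L2 L2ᵀ L3 := by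
  classical
  have hL1inv_symm : L1⁻¹ᵀ = L1⁻¹ := by rw [transpose_nonsing_inv, hL1]
  have hS_symm : (L3 - L2ᵀ * L1⁻¹ * L2)ᵀ = L3 - L2ᵀ * L1⁻¹ * L2 := by
    rw [transpose_sub, transpose_mul, transpose_mul, hL1inv_symm, hL3, transpose_transpose,
      Matrix.mul_assoc]
  have hSp_symm : Spᵀ = Sp := IsGroupInverse.transpose_eq_self hSp hS_symm
  exact ⟨transpose_schurBlockInverse _ _ _ hL1inv_symm hSp_symm,
    fromBlocks_mul_schurBlockInverse_mul _ _ _ _ hL1inv _ hSp.1⟩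

/-- For a real symmetric block matrix `M = [[L1, L2], [L2ᵀ, L3]]` with `L1` nonsingular and
`S = L3 - L2ᵀ L1⁻¹ L2`, with `Sp` the group inverse of `S`, the block matrix
`X = [[L1⁻¹ + L1⁻¹ L2 Sp L2ᵀ L1⁻¹, -L1⁻¹ L2 Sp], [-Sp L2ᵀ L1⁻¹, Sp]]`
is a symmetric `{1}`-inverse of `M`. -/
theorem stmt5 {n m : Type*} [Fintype n] [Fintype m] [DecidableEq n] [DecidableEq m]
    (L1 : Matrix n n ℝ) (L2 : Matrix n m ℝ) (L3 : Matrix m m ℝ)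
    (hL1 : L1ᵀ = L1) (hL3 : L3ᵀ = L3) (hL1inv : IsUnit L1.det)
    (Sp : Matrix m m ℝ)
    (hSp : (L3 - L2ᵀ * L1⁻¹ * L2) * Sp * (L3 - L2ᵀ * L1⁻¹ * L2) = L3 - L2ᵀ * L1⁻¹ * L2 ∧
      Sp * (L3 - L2ᵀ * L1⁻¹ * L2) * Sp = Sp ∧
      (L3 - L2ᵀ * L1⁻¹ * L2) * Sp = Sp * (L3 - L2ᵀ * L1⁻¹ * L2)) :
    (Matrix.fromBlocks
        (L1⁻¹ + L1⁻¹ * L2 * Sp * L2ᵀ * L1⁻¹) (-(L1⁻¹ * L2 * Sp))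
        (-(Sp * L2ᵀ * L1⁻¹)) Sp)ᵀ =
      Matrix.fromBlocks
        (L1⁻¹ + L1⁻¹ * L2 * Sp * L2ᵀ * L1⁻¹) (-(L1⁻¹ * L2 * Sp))
        (-(Sp * L2ᵀ * L1⁻¹)) Sp ∧
    Matrix.fromBlocks L1 L2 L2ᵀ L3 *
        Matrix.fromBlocks
          (L1⁻¹ + L1⁻¹ * L2 * Sp * L2ᵀ * L1⁻¹) (-(L1⁻¹ * L2 * Sp))
          (-(Sp * L2ᵀ * L1⁻¹)) Sp *
        Matrix.fromBlocks L1 L2 L2ᵀ L3 =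
      Matrix.fromBlocks L1 L2 L2ᵀ L3 :=
  stmt5_general L1 L2 L3 hL1 hL3 hL1inv Sp hSp
end

section
/- Let G1 and G2 be graphs, with G2 arbitrary. In the corona-vertex of the subdivision graph G1◇G2, the resistance distance between any two vertices i, j of the G1-part equals (L_{G1}^#)_{ii} + (L_{G1}^#)_{jj} - 2(L_{G1}^#)_{ij}; in particular it equals r_{ij}(G1). -/
open Matrix
open scoped Classical

/-- `X` is the group inverse of `M`. -/
def IsGroupInv {n : Type*} [Fintype n] [DecidableEq n] (M X : Matrix n n ℝ) : Prop :=
  M * X * M = M ∧ X * M * X = X ∧ M * X = X * M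

/-- The corona-vertex of the subdivision graph, `G1 ◇ G2`: take `G1` together with one copy of
the subdivision graph `S(G2)` for each vertex `i` of `G1` (a copy of `S(G2)` has the vertices of
`G2` together with one new vertex for each edge of `G2`, each new vertex joined to the two
endpoints of its edge), and join the `i`-th vertex of `G1` to every vertex of `V(G2)` in the
`i`-th copy. -/
def coronaVertex {V1 V2 : Type*} (G1 : SimpleGraph V1) (G2 : SimpleGraph V2) :
    SimpleGraph (V1 ⊕ (V1 × V2) ⊕ (V1 × G2.edgeSet)) :=
  SimpleGraph.fromRel (fun a b =>
    match a, b with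
    | Sum.inl i, Sum.inl j => G1.Adj i j
    | Sum.inl i, Sum.inr (Sum.inl (k, _)) => i = k
    | Sum.inr (Sum.inl (i, v)), Sum.inr (Sum.inr (k, e)) => i = k ∧ v ∈ (e : Sym2 V2)
    | _, _ => False)

/-! If `L w = eᵢ - eⱼ` for a symmetric `L` with group inverse `X`, then the quadratic form of `X`
at `eᵢ - eⱼ` is `X i i + X j j - 2 X i j = w i - w j`. On the connected graph `G1` such a potential
is `w = Y (eᵢ - eⱼ)`. Giving every vertex of the `k`-th copy of `S(G2)` the value `w k` extends it
to a potential on `G1 ◇ G2` with the same right-hand side, since no edge outside `G1` joins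
vertices of different values; hence both resistances equal `w i - w j`. -/

namespace IsGroupInv

variable {n : Type*} [Fintype n] [DecidableEq n] {M X : Matrix n n ℝ}

theorem unique {Z : Matrix n n ℝ} (hX : IsGroupInv M X) (hZ : IsGroupInv M Z) : X = Z := by
  obtain ⟨hX₁, hX₂, hX₃⟩ := hX
  obtain ⟨hZ₁, hZ₂, hZ₃⟩ := hZ
  have hXXM : X * X * M = X := by rw [Matrix.mul_assoc, ← hX₃, ← Matrix.mul_assoc, hX₂]
  have hMZZ : M * Z * Z = Z := by rw [hZ₃, hZ₂]
  calc X = X * X * (M * Z * M) := by rw [hZ₁, hXXM]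
    _ = X * X * M * (Z * M) := by simp only [Matrix.mul_assoc]
    _ = M * X * Z := by rw [hXXM, ← hZ₃, ← Matrix.mul_assoc, ← hX₃]
    _ = M * X * (M * Z * Z) := by rw [hMZZ]
    _ = (M * X * M) * Z * Z := by simp only [Matrix.mul_assoc]
    _ = Z := by rw [hX₁, hMZZ]

theorem isSymm (hM : M.IsSymm) (hX : IsGroupInv M X) : X.IsSymm := by
  obtain ⟨h₁, h₂, h₃⟩ := hX
  refine unique ⟨?_, ?_, ?_⟩ ⟨h₁, h₂, h₃⟩
  · simpa [transpose_mul, hM.eq, Matrix.mul_assoc] using congrArg transpose h₁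
  · simpa [transpose_mul, hM.eq, Matrix.mul_assoc] using congrArg transpose h₂
  · simpa [transpose_mul, hM.eq] using congrArg transpose h₃.symm

theorem mulVec_dotProduct_mulVec_mulVec (hM : M.IsSymm) (hX : IsGroupInv M X) {w : n → ℝ} :
    (M *ᵥ w) ⬝ᵥ (X *ᵥ (M *ᵥ w)) = w ⬝ᵥ (M *ᵥ w) := by
  calc (M *ᵥ w) ⬝ᵥ (X *ᵥ (M *ᵥ w)) = (w ᵥ* M) ⬝ᵥ (X *ᵥ (M *ᵥ w)) := by
        rw [← mulVec_transpose, hM.eq]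
    _ = w ⬝ᵥ ((M * X * M) *ᵥ w) := by
        rw [← dotProduct_mulVec, mulVec_mulVec, mulVec_mulVec, Matrix.mul_assoc]
    _ = w ⬝ᵥ (M *ᵥ w) := by rw [hX.1]

theorem apply_add_apply_sub_two_mul (hM : M.IsSymm) (hX : IsGroupInv M X) {w : n → ℝ} {i j : n}
    (hw : M *ᵥ w = Pi.single i 1 - Pi.single j 1) :
    X i i + X j j - 2 * X i j = w i - w j := by
  have h := hX.mulVec_dotProduct_mulVec_mulVec hM (w := w)
  rw [hw] at h
  simp only [mulVec_sub, mulVec_single_one, sub_dotProduct, dotProduct_sub, single_dotProduct,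
    dotProduct_single, col_apply, one_mul, mul_one] at h
  rw [(hX.isSymm hM).apply i j] at h
  linarith

end IsGroupInv

namespace SimpleGraph

variable {V : Type*} [Fintype V] [DecidableEq V] (G : SimpleGraph V) [DecidableRel G.Adj]

theorem lapMatrix_mulVec_apply_eq_sum_ite {R : Type*} [NonAssocRing R] (x : V → R) (a : V) :
    (G.lapMatrix R *ᵥ x) a = ∑ b, if G.Adj a b then x a - x b else 0 := by
  rw [lapMatrix_mulVec_apply, ← Finset.sum_filter, ← neighborFinset_eq_filter,
    Finset.sum_sub_distrib, Finset.sum_const, card_neighborFinset_eq_degree, nsmul_eq_mul]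

theorem sum_lapMatrix_mulVec {R : Type*} [CommRing R] (x : V → R) :
    ∑ k, (G.lapMatrix R *ᵥ x) k = 0 := by
  calc ∑ k, (G.lapMatrix R *ᵥ x) k = (fun _ ↦ 1) ⬝ᵥ (G.lapMatrix R *ᵥ x) := by
        simp [dotProduct]
    _ = (G.lapMatrix R *ᵥ fun _ ↦ 1) ⬝ᵥ x := by
        rw [dotProduct_mulVec, ← mulVec_transpose, (G.isSymm_lapMatrix (R := R)).eq]
    _ = 0 := by rw [lapMatrix_mulVec_const_eq_zero, zero_dotProduct]

theorem eq_zero_of_lapMatrix_mulVec_eq_zero (hG : G.Connected) {x : V → ℝ}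
    (hx : G.lapMatrix ℝ *ᵥ x = 0) (hsum : ∑ k, x k = 0) : x = 0 := by
  obtain ⟨a⟩ := hG.nonempty
  have hconst : ∀ k, x k = x a := fun k ↦
    G.lapMatrix_mulVec_eq_zero_iff_forall_reachable.mp hx k a (hG k a)
  have hcard : (Fintype.card V : ℝ) ≠ 0 := Nat.cast_ne_zero.mpr (Fintype.card_pos_iff.mpr ⟨a⟩).ne'
  simp only [hconst, Finset.sum_const, Finset.card_univ, nsmul_eq_mul] at hsum
  funext k
  rw [hconst, Pi.zero_apply]
  exact (mul_eq_zero.mp hsum).resolve_left hcard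

theorem lapMatrix_mulVec_groupInv_mulVec (hG : G.Connected) {Y : Matrix V V ℝ}
    (hY : IsGroupInv (G.lapMatrix ℝ) Y) {d : V → ℝ} (hd : ∑ k, d k = 0) :
    G.lapMatrix ℝ *ᵥ (Y *ᵥ d) = d := by
  set L := G.lapMatrix ℝ
  have hLLY : L * L * Y = L := by rw [Matrix.mul_assoc, hY.2.2, ← Matrix.mul_assoc, hY.1]
  have hker : L *ᵥ (d - L *ᵥ (Y *ᵥ d)) = 0 := by
    rw [mulVec_sub, mulVec_mulVec, mulVec_mulVec, hLLY, sub_self]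
  have hsum : ∑ k, (d - L *ᵥ (Y *ᵥ d)) k = 0 := by
    simp only [Pi.sub_apply]
    rw [Finset.sum_sub_distrib, hd, G.sum_lapMatrix_mulVec, sub_self]
  exact (sub_eq_zero.mp (G.eq_zero_of_lapMatrix_mulVec_eq_zero hG hker hsum)).symm

end SimpleGraph

namespace coronaVertex

variable {V1 V2 : Type*} {G1 : SimpleGraph V1} (G2 : SimpleGraph V2)

def root : V1 ⊕ (V1 × V2) ⊕ (V1 × G2.edgeSet) → V1 :=
  Sum.elim id (Sum.elim Prod.fst Prod.fst)

variable {G2}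

theorem adj_inl_inl {k l : V1} : (coronaVertex G1 G2).Adj (.inl k) (.inl l) ↔ G1.Adj k l := by
  simp only [coronaVertex, SimpleGraph.fromRel_adj, ne_eq, Sum.inl.injEq, G1.adj_comm l k, or_self]
  exact ⟨And.right, fun h ↦ ⟨h.ne, h⟩⟩

theorem root_eq_of_adj_inr {a : V1 ⊕ (V1 × V2) ⊕ (V1 × G2.edgeSet)}
    {b : (V1 × V2) ⊕ (V1 × G2.edgeSet)}
    (h : (coronaVertex G1 G2).Adj a (.inr b)) : root G2 a = root G2 (.inr b) := by
  rcases a with k | ⟨k, v⟩ | ⟨k, e⟩ <;> rcases b with ⟨l, v'⟩ | ⟨l, e'⟩ <;>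
    simp [coronaVertex, root] at h ⊢ <;> tauto

theorem lapMatrix_mulVec_comp_root [Fintype V1] [Fintype V2] {R : Type*} [NonAssocRing R]
    (w : V1 → R) :
    (coronaVertex G1 G2).lapMatrix R *ᵥ (w ∘ root G2) = Sum.elim (G1.lapMatrix R *ᵥ w) 0 := by
  have hzero : ∀ a b, (if (coronaVertex G1 G2).Adj a (.inr b) then
      (w ∘ root G2) a - (w ∘ root G2) (.inr b) else 0) = 0 := fun a b ↦
    ite_eq_right_iff.mpr fun h ↦ sub_eq_zero.mpr (congrArg w (root_eq_of_adj_inr h))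
  funext a
  rw [SimpleGraph.lapMatrix_mulVec_apply_eq_sum_ite]
  rcases a with k | b
  · rw [Fintype.sum_sum_type, Sum.elim_inl, SimpleGraph.lapMatrix_mulVec_apply_eq_sum_ite]
    simp only [hzero, Finset.sum_const_zero, add_zero, adj_inl_inl]
    rfl
  · exact Finset.sum_eq_zero fun c _ ↦ ite_eq_right_iff.mpr fun h ↦
      sub_eq_zero.mpr (congrArg w (root_eq_of_adj_inr h.symm).symm)

end coronaVertex

/-- In `G1 ◇ G2`, the resistance distance between two vertices of the `G1`-part equals
`(L_{G1}^#)_{ii} + (L_{G1}^#)_{jj} - 2 (L_{G1}^#)_{ij}`, i.e. the resistance distance in `G1`. -/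
theorem stmt15 {V1 V2 : Type*} [Fintype V1] [Fintype V2]
    (G1 : SimpleGraph V1) (G2 : SimpleGraph V2) (hG1 : G1.Connected)
    (X : Matrix (V1 ⊕ (V1 × V2) ⊕ (V1 × G2.edgeSet)) (V1 ⊕ (V1 × V2) ⊕ (V1 × G2.edgeSet)) ℝ)
    (hX : IsGroupInv ((coronaVertex G1 G2).lapMatrix ℝ) X)
    (Y : Matrix V1 V1 ℝ) (hY : IsGroupInv (G1.lapMatrix ℝ) Y) (i j : V1) :
    X (Sum.inl i) (Sum.inl i) + X (Sum.inl j) (Sum.inl j) -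
        2 * X (Sum.inl i) (Sum.inl j) =
      Y i i + Y j j - 2 * Y i j := by
  set d : V1 → ℝ := Pi.single i 1 - Pi.single j 1
  have hd : ∑ k, d k = 0 := by simp [d, Finset.sum_sub_distrib]
  set w := Y *ᵥ d
  have hw : G1.lapMatrix ℝ *ᵥ w = d := G1.lapMatrix_mulVec_groupInv_mulVec hG1 hY hd
  have hlift : (coronaVertex G1 G2).lapMatrix ℝ *ᵥ (w ∘ coronaVertex.root G2) =
      Pi.single (.inl i) 1 - Pi.single (.inl j) 1 := by
    rw [coronaVertex.lapMatrix_mulVec_comp_root, hw]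
    funext a
    rcases a <;> simp [d, Pi.single_apply]
  rw [hX.apply_add_apply_sub_two_mul (SimpleGraph.isSymm_lapMatrix ℝ _) hlift,
    hY.apply_add_apply_sub_two_mul (SimpleGraph.isSymm_lapMatrix ℝ _) hw]
  rfl
end

section
/- In the corona-vertex of the subdivision graph G1◇G2, for two original vertices i, j of G2 (in the same copy), with M = 2(L_{G2}+2I_{n2})^{-1} ⊗ I_{n1}, one has r_{ij}(G1◇G2) = M_{ii} + M_{jj} - 2M_{ij}. -/
open Matrix
open scoped Classical

theorem lap_apply' {V : Type*} [Fintype V] [DecidableEq V] (G : SimpleGraph V)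
    [DecidableRel G.Adj] (f : V → ℝ) (a : V) :
    (G.lapMatrix ℝ *ᵥ f) a = ∑ b : V, if G.Adj a b then (f a - f b) else 0 := by
  rw [SimpleGraph.lapMatrix_mulVec_apply, ← Finset.sum_filter]
  rw [show Finset.filter (G.Adj a) Finset.univ = G.neighborFinset a by
    ext b; simp [SimpleGraph.mem_neighborFinset]]
  rw [Finset.sum_sub_distrib, Finset.sum_const, SimpleGraph.card_neighborFinset_eq_degree,
    nsmul_eq_mul]

theorem sum_inc {V2 : Type*} [Fintype V2] [DecidableEq V2] (G2 : SimpleGraph V2)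
    [DecidableRel G2.Adj] (x : V2) (g : Sym2 V2 → ℝ) :
    ∑ e : G2.edgeSet, (if x ∈ (e : Sym2 V2) then g e else 0)
      = ∑ y ∈ G2.neighborFinset x, g s(x, y) := by
  rw [← Finset.sum_filter]
  refine Finset.sum_bij' (i := fun (e : G2.edgeSet) he => Sym2.Mem.other (Finset.mem_filter.mp he).2)
    (j := fun y hy => ⟨s(x,y), G2.mem_edgeSet.mpr (by simpa using hy)⟩) ?_ ?_ ?_ ?_ ?_
  · intro e he
    simp only [SimpleGraph.mem_neighborFinset]
    have h1 := (Finset.mem_filter.mp he).2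
    have h2 := Sym2.other_spec h1
    exact G2.mem_edgeSet.mp (by rw [h2]; exact e.2)
  · intro y hy
    simp
  · intro e he
    have h1 := (Finset.mem_filter.mp he).2
    apply Subtype.ext
    simp [Sym2.other_spec h1]
  · intro y hy
    have h1 : x ∈ s(x, y) := Sym2.mem_mk_left x y
    have := Sym2.other_spec h1
    rw [Sym2.congr_right] at this
    convert this using 2
  · intro e he
    have h1 := (Finset.mem_filter.mp he).2
    rw [Sym2.other_spec h1]

section Adj
variable {V1 V2 : Type*} (G1 : SimpleGraph V1) (G2 : SimpleGraph V2)

theorem adj_ll (i j : V1) : (coronaVertex G1 G2).Adj (Sum.inl i) (Sum.inl j) ↔ G1.Adj i j := by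
  simp only [coronaVertex, SimpleGraph.fromRel_adj, ne_eq, Sum.inl.injEq]
  constructor
  · rintro ⟨h1, h2 | h2⟩ <;> [exact h2; exact h2.symm]
  · intro h; exact ⟨h.ne, Or.inl h⟩

theorem adj_lv (i : V1) (p : V1 × V2) :
    (coronaVertex G1 G2).Adj (Sum.inl i) (Sum.inr (Sum.inl p)) ↔ i = p.1 := by
  obtain ⟨j, x⟩ := p
  simp [coronaVertex, SimpleGraph.fromRel_adj]

theorem adj_le (i : V1) (p : V1 × G2.edgeSet) :
    ¬ (coronaVertex G1 G2).Adj (Sum.inl i) (Sum.inr (Sum.inr p)) := by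
  obtain ⟨j, e⟩ := p
  simp [coronaVertex, SimpleGraph.fromRel_adj]

theorem adj_vv (p q : V1 × V2) :
    ¬ (coronaVertex G1 G2).Adj (Sum.inr (Sum.inl p)) (Sum.inr (Sum.inl q)) := by
  obtain ⟨i, x⟩ := p; obtain ⟨j, y⟩ := q
  simp [coronaVertex, SimpleGraph.fromRel_adj]

theorem adj_ve (p : V1 × V2) (q : V1 × G2.edgeSet) :
    (coronaVertex G1 G2).Adj (Sum.inr (Sum.inl p)) (Sum.inr (Sum.inr q)) ↔
      p.1 = q.1 ∧ p.2 ∈ (q.2 : Sym2 V2) := by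
  obtain ⟨i, x⟩ := p; obtain ⟨j, e⟩ := q
  simp [coronaVertex, SimpleGraph.fromRel_adj]

theorem adj_ee (p q : V1 × G2.edgeSet) :
    ¬ (coronaVertex G1 G2).Adj (Sum.inr (Sum.inr p)) (Sum.inr (Sum.inr q)) := by
  obtain ⟨i, e⟩ := p; obtain ⟨j, f⟩ := q
  simp [coronaVertex, SimpleGraph.fromRel_adj]

end Adj

theorem corona_lap_mulVec {V1 V2 : Type*} [Fintype V1] [Fintype V2]
    (G1 : SimpleGraph V1) (G2 : SimpleGraph V2) (k : V1)
    (z w0 : V2 → ℝ) (t : Sym2 V2 → ℝ)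
    (htdef : ∀ a b : V2, t s(a, b) = (z a + z b) / 2)
    (hsumz : ∑ x : V2, z x = 0)
    (hzeq : ∀ x : V2, (G2.lapMatrix ℝ *ᵥ z) x + 2 * z x = 2 * w0 x) :
    (coronaVertex G1 G2).lapMatrix ℝ *ᵥ
        (Sum.elim (fun _ => (0:ℝ))
          (Sum.elim (fun p : V1 × V2 => if p.1 = k then z p.2 else 0)
            (fun q : V1 × G2.edgeSet => if q.1 = k then t (q.2 : Sym2 V2) else 0)))
      = Sum.elim (fun _ => (0:ℝ))
          (Sum.elim (fun p : V1 × V2 => if p.1 = k then w0 p.2 else 0)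
            (fun _ => (0:ℝ))) := by
  classical
  set y : (V1 ⊕ (V1 × V2) ⊕ (V1 × G2.edgeSet)) → ℝ := Sum.elim (fun _ => (0:ℝ))
    (Sum.elim (fun p : V1 × V2 => if p.1 = k then z p.2 else 0)
      (fun q : V1 × G2.edgeSet => if q.1 = k then t (q.2 : Sym2 V2) else 0)) with hy
  funext a
  rw [lap_apply', Fintype.sum_sum_type]
  conv_lhs => rw [Fintype.sum_sum_type]
  match a with
  | Sum.inl j =>
    have e1 : ∑ b : V1, (if (coronaVertex G1 G2).Adj (Sum.inl j) (Sum.inl b) then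
        (y (Sum.inl j) - y (Sum.inl b)) else 0) = 0 := by
      simp [hy]
    have e2 : ∑ p : V1 × V2, (if (coronaVertex G1 G2).Adj (Sum.inl j) (Sum.inr (Sum.inl p)) then
        (y (Sum.inl j) - y (Sum.inr (Sum.inl p))) else 0) = 0 := by
      rw [Fintype.sum_prod_type]
      by_cases hjk : j = k
      · subst hjk
        simp only [adj_lv, hy, Sum.elim_inl, Sum.elim_inr, zero_sub]
        rw [Finset.sum_comm]
        simp [Finset.sum_ite_eq, Finset.sum_neg_distrib, hsumz]
      · simp only [adj_lv, hy, Sum.elim_inl, Sum.elim_inr, zero_sub]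
        rw [Finset.sum_comm]
        simp [Finset.sum_ite_eq, hjk]
    have e3 : ∑ q : V1 × G2.edgeSet,
        (if (coronaVertex G1 G2).Adj (Sum.inl j) (Sum.inr (Sum.inr q)) then
        (y (Sum.inl j) - y (Sum.inr (Sum.inr q))) else 0) = 0 := by
      simp [adj_le]
    rw [e1, e2, e3]
    simp
  | Sum.inr (Sum.inl (i, x)) =>
    have e1 : ∑ b : V1,
        (if (coronaVertex G1 G2).Adj (Sum.inr (Sum.inl (i, x))) (Sum.inl b) then
        (y (Sum.inr (Sum.inl (i, x))) - y (Sum.inl b)) else 0)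
        = y (Sum.inr (Sum.inl (i, x))) := by
      have h : ∀ b : V1, (coronaVertex G1 G2).Adj (Sum.inr (Sum.inl (i, x))) (Sum.inl b) ↔
          b = i := by
        intro b; rw [SimpleGraph.adj_comm, adj_lv]
      simp only [h, hy, Sum.elim_inl, Sum.elim_inr, sub_zero]
      simp [Finset.sum_ite_eq]
    have e2 : ∑ p : V1 × V2,
        (if (coronaVertex G1 G2).Adj (Sum.inr (Sum.inl (i, x))) (Sum.inr (Sum.inl p)) then
        (y (Sum.inr (Sum.inl (i, x))) - y (Sum.inr (Sum.inl p))) else 0) = 0 := by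
      simp [adj_vv]
    have e3 : ∑ q : V1 × G2.edgeSet,
        (if (coronaVertex G1 G2).Adj (Sum.inr (Sum.inl (i, x))) (Sum.inr (Sum.inr q)) then
        (y (Sum.inr (Sum.inl (i, x))) - y (Sum.inr (Sum.inr q))) else 0)
        = ∑ e : G2.edgeSet, (if x ∈ (e : Sym2 V2) then
            (y (Sum.inr (Sum.inl (i, x))) - (if i = k then t (e : Sym2 V2) else 0)) else 0) := by
      rw [Fintype.sum_prod_type]
      simp only [adj_ve, ite_and]
      rw [Finset.sum_comm]
      congr 1
      funext e
      rw [Finset.sum_ite_eq]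
      simp [hy]
    rw [e1, e2, e3]
    by_cases hik : i = k
    · subst hik
      have hrhs : Sum.elim (fun _ : V1 => (0:ℝ))
          (Sum.elim (fun p : V1 × V2 => if p.1 = i then w0 p.2 else 0)
            (fun _ : V1 × G2.edgeSet => (0:ℝ))) (Sum.inr (Sum.inl (i, x))) = w0 x := by simp
      rw [hrhs]
      simp only [hy, Sum.elim_inl, Sum.elim_inr, eq_self_iff_true, if_true]
      rw [zero_add, sum_inc G2 x (fun s => z x - t s)]
      have e4 : ∀ b ∈ G2.neighborFinset x, z x - t s(x, b) = (z x - z b)/2 := by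
        intro b _
        rw [htdef]
        ring
      rw [Finset.sum_congr rfl e4]
      have e5 : ∑ b ∈ G2.neighborFinset x, (z x - z b)/2
          = ((G2.lapMatrix ℝ *ᵥ z) x) / 2 := by
        rw [SimpleGraph.lapMatrix_mulVec_apply]
        rw [← Finset.sum_div, Finset.sum_sub_distrib, Finset.sum_const,
          SimpleGraph.card_neighborFinset_eq_degree, nsmul_eq_mul]
      rw [e5]
      have e6 := hzeq x
      linarith
    · have hyv : y (Sum.inr (Sum.inl (i, x))) = 0 := by simp [hy, hik]
      have hrhs : Sum.elim (fun _ : V1 => (0:ℝ))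
          (Sum.elim (fun p : V1 × V2 => if p.1 = k then w0 p.2 else 0)
            (fun _ : V1 × G2.edgeSet => (0:ℝ))) (Sum.inr (Sum.inl (i, x))) = 0 := by simp [hik]
      rw [hyv, hrhs]
      simp [hik]
  | Sum.inr (Sum.inr (i, e)) =>
    have e1 : ∑ b : V1,
        (if (coronaVertex G1 G2).Adj (Sum.inr (Sum.inr (i, e))) (Sum.inl b) then
        (y (Sum.inr (Sum.inr (i, e))) - y (Sum.inl b)) else 0) = 0 := by
      have h : ∀ b : V1, ¬ (coronaVertex G1 G2).Adj (Sum.inr (Sum.inr (i, e))) (Sum.inl b) := by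
        intro b; rw [SimpleGraph.adj_comm]; exact adj_le G1 G2 b (i, e)
      simp [h]
    have e2 : ∑ p : V1 × V2,
        (if (coronaVertex G1 G2).Adj (Sum.inr (Sum.inr (i, e))) (Sum.inr (Sum.inl p)) then
        (y (Sum.inr (Sum.inr (i, e))) - y (Sum.inr (Sum.inl p))) else 0)
        = ∑ x : V2, (if x ∈ (e : Sym2 V2) then
            (y (Sum.inr (Sum.inr (i, e))) - (if i = k then z x else 0)) else 0) := by
      rw [Fintype.sum_prod_type]
      have hcomm : ∀ p : V1 × V2,
          (coronaVertex G1 G2).Adj (Sum.inr (Sum.inr (i, e))) (Sum.inr (Sum.inl p)) ↔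
          (p.1 = i ∧ p.2 ∈ (e : Sym2 V2)) := by
        intro p; rw [SimpleGraph.adj_comm, adj_ve]
      simp only [hcomm, ite_and]
      rw [Finset.sum_comm]
      congr 1
      funext x
      rw [Finset.sum_ite_eq']
      simp [hy]
    have e3 : ∑ q : V1 × G2.edgeSet,
        (if (coronaVertex G1 G2).Adj (Sum.inr (Sum.inr (i, e))) (Sum.inr (Sum.inr q)) then
        (y (Sum.inr (Sum.inr (i, e))) - y (Sum.inr (Sum.inr q))) else 0) = 0 := by
      simp [adj_ee]
    rw [e1, e2, e3]
    have hrhs : Sum.elim (fun _ : V1 => (0:ℝ))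
        (Sum.elim (fun p : V1 × V2 => if p.1 = k then w0 p.2 else 0)
          (fun _ : V1 × G2.edgeSet => (0:ℝ))) (Sum.inr (Sum.inr (i, e))) = 0 := by simp
    rw [hrhs]
    by_cases hik : i = k
    · subst hik
      simp only [hy, Sum.elim_inl, Sum.elim_inr, eq_self_iff_true, if_true]
      obtain ⟨s, hs⟩ := e
      induction s with
      | _ x1 x2 =>
        have hne : x1 ≠ x2 := (G2.mem_edgeSet.mp hs).ne
        have hmem : ∀ x : V2, x ∈ ((⟨s(x1,x2), hs⟩ : G2.edgeSet) : Sym2 V2) ↔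
            (x = x1 ∨ x = x2) := by
          intro x; exact Sym2.mem_iff
        have hsum : ∑ x : V2, (if x ∈ ((⟨s(x1,x2), hs⟩ : G2.edgeSet) : Sym2 V2) then
            (t ((⟨s(x1,x2), hs⟩ : G2.edgeSet) : Sym2 V2) - z x) else 0)
            = (t s(x1,x2) - z x1) + (t s(x1,x2) - z x2) := by
          have hpt : ∀ x : V2, (if x ∈ ((⟨s(x1,x2), hs⟩ : G2.edgeSet) : Sym2 V2) then
              (t ((⟨s(x1,x2), hs⟩ : G2.edgeSet) : Sym2 V2) - z x) else 0)
              = (if x = x1 then (t s(x1,x2) - z x) else 0)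
                + (if x = x2 then (t s(x1,x2) - z x) else 0) := by
            intro x
            by_cases h1 : x = x1 <;> by_cases h2 : x = x2 <;>
              simp_all [Sym2.mem_iff]
          rw [Finset.sum_congr rfl (fun x _ => hpt x), Finset.sum_add_distrib]
          simp [Finset.sum_ite_eq']
        rw [hsum, htdef]
        ring
    · have hyv : y (Sum.inr (Sum.inr (i, e))) = 0 := by simp [hy, hik]
      rw [hyv]
      simp [hik]

theorem groupInv_unique {n : Type*} [Fintype n] [DecidableEq n] {M X Y : Matrix n n ℝ}
    (hX : IsGroupInv M X) (hY : IsGroupInv M Y) : X = Y := by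
  obtain ⟨hX1, hX2, hX3⟩ := hX
  obtain ⟨hY1, hY2, hY3⟩ := hY
  have a1 : X * M = (X * M) * (Y * M) := by
    calc X * M = X * (M * Y * M) := by rw [hY1]
      _ = (X * M) * (Y * M) := by noncomm_ring
  have b1 : Y * M = (X * M) * (Y * M) := by
    calc Y * M = M * Y := hY3.symm
      _ = (M * X * M) * Y := by rw [hX1]
      _ = (M * X) * (M * Y) := by noncomm_ring
      _ = (X * M) * (Y * M) := by rw [hX3, hY3]
  have hEM : X * M = Y * M := a1.trans b1.symm
  have hMXY : M * X = M * Y := by rw [hX3, hEM, ← hY3]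
  calc X = X * M * X := hX2.symm
    _ = X * (M * X) := by rw [mul_assoc]
    _ = X * (M * Y) := by rw [hMXY]
    _ = (X * M) * Y := by rw [mul_assoc]
    _ = (Y * M) * Y := by rw [hEM]
    _ = Y := hY2

theorem groupInv_symm {n : Type*} [Fintype n] [DecidableEq n] {M X : Matrix n n ℝ}
    (hM : M.IsSymm) (hX : IsGroupInv M X) : Xᵀ = X := by
  refine groupInv_unique ?_ hX
  obtain ⟨h1, h2, h3⟩ := hX
  refine ⟨?_, ?_, ?_⟩
  · have := congrArg Matrix.transpose h1
    simpa [Matrix.transpose_mul, hM.eq, Matrix.mul_assoc] using this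
  · have := congrArg Matrix.transpose h2
    simpa [Matrix.transpose_mul, hM.eq, Matrix.mul_assoc] using this
  · have := congrArg Matrix.transpose h3
    simpa [Matrix.transpose_mul, hM.eq] using this.symm

open Kronecker in
/-- In `G1 ◇ G2`, with `M = 2 (L_{G2} + 2I)⁻¹ ⊗ I_{n1}`, the resistance distance between two
original `G2`-vertices `u`, `v` in the `k`-th copy equals `M_{(u,k)(u,k)} + M_{(v,k)(v,k)} -
2 M_{(u,k)(v,k)}`. -/
theorem stmt16 {V1 V2 : Type*} [Fintype V1] [Fintype V2]
    (G1 : SimpleGraph V1) (G2 : SimpleGraph V2) (hG1 : G1.Connected)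
    (X : Matrix (V1 ⊕ (V1 × V2) ⊕ (V1 × G2.edgeSet)) (V1 ⊕ (V1 × V2) ⊕ (V1 × G2.edgeSet)) ℝ)
    (hX : IsGroupInv ((coronaVertex G1 G2).lapMatrix ℝ) X)
    (k : V1) (u v : V2) :
    X (Sum.inr (Sum.inl (k, u))) (Sum.inr (Sum.inl (k, u))) +
        X (Sum.inr (Sum.inl (k, v))) (Sum.inr (Sum.inl (k, v))) -
        2 * X (Sum.inr (Sum.inl (k, u))) (Sum.inr (Sum.inl (k, v))) =
      (((2 : ℝ) • (G2.lapMatrix ℝ + (2 : ℝ) • (1 : Matrix V2 V2 ℝ))⁻¹) ⊗ₖ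
            (1 : Matrix V1 V1 ℝ)) (u, k) (u, k) +
        (((2 : ℝ) • (G2.lapMatrix ℝ + (2 : ℝ) • (1 : Matrix V2 V2 ℝ))⁻¹) ⊗ₖ
            (1 : Matrix V1 V1 ℝ)) (v, k) (v, k) -
        2 * (((2 : ℝ) • (G2.lapMatrix ℝ + (2 : ℝ) • (1 : Matrix V2 V2 ℝ))⁻¹) ⊗ₖ
            (1 : Matrix V1 V1 ℝ)) (u, k) (v, k) := by
  classical
  obtain ⟨hX1, hX2, hX3⟩ := id hX
  have hLsym : ((coronaVertex G1 G2).lapMatrix ℝ).IsSymm := SimpleGraph.isSymm_lapMatrix ℝ _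
  have hXsymm : Xᵀ = X := groupInv_symm hLsym hX
  set L := (coronaVertex G1 G2).lapMatrix ℝ with hLdef
  set A : Matrix V2 V2 ℝ := G2.lapMatrix ℝ + (2 : ℝ) • (1 : Matrix V2 V2 ℝ) with hAdef
  have hApos : A.PosDef := by
    refine Matrix.PosDef.posSemidef_add (SimpleGraph.posSemidef_lapMatrix ℝ G2) ?_
    have hdiag : (2:ℝ) • (1 : Matrix V2 V2 ℝ) = Matrix.diagonal (fun _ => (2:ℝ)) := by
      ext i j
      by_cases h : i = j <;> simp [Matrix.one_apply, Matrix.diagonal, h]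
    rw [hdiag]
    exact Matrix.posDef_diagonal_iff.mpr (fun _ => by norm_num)
  have hdet : IsUnit A.det := (Matrix.isUnit_iff_isUnit_det A).mp hApos.isUnit
  have hAH : A * A⁻¹ = 1 := Matrix.mul_nonsing_inv _ hdet
  have hHA : A⁻¹ * A = 1 := Matrix.nonsing_inv_mul _ hdet
  set H : Matrix V2 V2 ℝ := A⁻¹ with hHdef
  have hAsymm : Aᵀ = A := by
    rw [hAdef, Matrix.transpose_add, (SimpleGraph.isSymm_lapMatrix ℝ G2).eq, Matrix.transpose_smul,
      Matrix.transpose_one]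
  have hHsymm : Hᵀ = H := by rw [hHdef, Matrix.transpose_nonsing_inv, hAsymm]
  set w0 : V2 → ℝ := Pi.single u 1 - Pi.single v 1 with hw0
  set z : V2 → ℝ := fun x => 2 * (H *ᵥ w0) x with hz
  have hAzfun : A *ᵥ z = (2:ℝ) • w0 := by
    have h2 : z = (2:ℝ) • (H *ᵥ w0) := rfl
    rw [h2, Matrix.mulVec_smul, Matrix.mulVec_mulVec, hAH, Matrix.one_mulVec]
  have hzeq : ∀ x : V2, (G2.lapMatrix ℝ *ᵥ z) x + 2 * z x = 2 * w0 x := by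
    intro x
    have := congrFun hAzfun x
    rw [hAdef] at this
    rw [Matrix.add_mulVec, Matrix.smul_mulVec, Matrix.one_mulVec] at this
    simpa [smul_eq_mul] using this
  have hsumz : ∑ x : V2, z x = 0 := by
    have hones : A *ᵥ (fun _ => (1:ℝ)) = (2:ℝ) • (fun _ => (1:ℝ)) := by
      rw [hAdef, Matrix.add_mulVec, SimpleGraph.lapMatrix_mulVec_const_eq_zero,
        Matrix.smul_mulVec, Matrix.one_mulVec]
      funext i; simp
    have hH1 : H *ᵥ (fun _ => (1:ℝ)) = fun _ => (1/2 : ℝ) := by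
      have h3 := congrArg (fun q => H *ᵥ q) hones
      simp only [Matrix.mulVec_mulVec, Matrix.mulVec_smul] at h3
      rw [hHdef, hHA, Matrix.one_mulVec] at h3
      funext i
      have h4 := congrFun h3.symm i
      simp only [Pi.smul_apply, smul_eq_mul] at h4
      linarith
    have h1 : ∑ x : V2, z x = 2 * ((fun _ => (1:ℝ)) ⬝ᵥ (H *ᵥ w0)) := by
      simp [hz, dotProduct, Finset.mul_sum]
    rw [h1, Matrix.dotProduct_mulVec, ← Matrix.mulVec_transpose, hHsymm, hH1]
    simp [hw0, dotProduct, Pi.single_apply, mul_sub, Finset.sum_sub_distrib]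
  set t : Sym2 V2 → ℝ := Sym2.lift ⟨fun a b => (z a + z b)/2, fun a b => by ring_nf⟩ with ht
  have htdef : ∀ a b : V2, t s(a, b) = (z a + z b) / 2 := by
    intro a b; rw [ht, Sym2.lift_mk]
  set y : (V1 ⊕ (V1 × V2) ⊕ (V1 × G2.edgeSet)) → ℝ := Sum.elim (fun _ => (0:ℝ))
    (Sum.elim (fun p : V1 × V2 => if p.1 = k then z p.2 else 0)
      (fun q : V1 × G2.edgeSet => if q.1 = k then t (q.2 : Sym2 V2) else 0)) with hy
  set w : (V1 ⊕ (V1 × V2) ⊕ (V1 × G2.edgeSet)) → ℝ := Sum.elim (fun _ => (0:ℝ))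
    (Sum.elim (fun p : V1 × V2 => if p.1 = k then w0 p.2 else 0)
      (fun _ : V1 × G2.edgeSet => (0:ℝ))) with hwdef
  have hLy : L *ᵥ y = w := by
    rw [hLdef, hy, hwdef]
    exact corona_lap_mulVec G1 G2 k z w0 t htdef hsumz hzeq
  set a1 : V1 ⊕ (V1 × V2) ⊕ (V1 × G2.edgeSet) := Sum.inr (Sum.inl (k, u)) with ha1
  set a2 : V1 ⊕ (V1 × V2) ⊕ (V1 × G2.edgeSet) := Sum.inr (Sum.inl (k, v)) with ha2
  have hwsingle : w = Pi.single a1 1 - Pi.single a2 1 := by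
    funext b
    rw [hwdef]
    match b with
    | Sum.inl j => simp [Pi.single_apply, ha1, ha2]
    | Sum.inr (Sum.inl (i, x)) =>
      by_cases hik : i = k
      · subst hik
        simp [Pi.single_apply, ha1, ha2, hw0, Prod.ext_iff]
      · simp [Pi.single_apply, ha1, ha2, Ne.symm hik, hik, Prod.ext_iff]
    | Sum.inr (Sum.inr (i, e)) => simp [Pi.single_apply, ha1, ha2]
  have step : ∀ c, (L *ᵥ y) ⬝ᵥ c = y ⬝ᵥ (L *ᵥ c) := by
    intro c
    rw [dotProduct_comm, Matrix.dotProduct_mulVec]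
    have hvm : c ᵥ* L = L *ᵥ c := by rw [← Matrix.vecMul_transpose, hLsym.eq]
    rw [hvm, dotProduct_comm]
  have key : w ⬝ᵥ (X *ᵥ w) = y ⬝ᵥ w := by
    calc w ⬝ᵥ (X *ᵥ w) = (L *ᵥ y) ⬝ᵥ (X *ᵥ (L *ᵥ y)) := by rw [hLy]
      _ = y ⬝ᵥ (L *ᵥ (X *ᵥ (L *ᵥ y))) := step _
      _ = y ⬝ᵥ ((L * X * L) *ᵥ y) := by rw [Matrix.mulVec_mulVec, Matrix.mulVec_mulVec]
      _ = y ⬝ᵥ (L *ᵥ y) := by rw [hX1]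
      _ = y ⬝ᵥ w := by rw [hLy]
  have lhs_eq : w ⬝ᵥ (X *ᵥ w) = X a1 a1 + X a2 a2 - X a1 a2 - X a2 a1 := by
    rw [hwsingle, Matrix.mulVec_sub, Matrix.mulVec_single, Matrix.mulVec_single,
      sub_dotProduct, dotProduct_sub, dotProduct_sub,
      single_dotProduct, single_dotProduct, single_dotProduct,
      single_dotProduct]
    simp only [Pi.sub_apply, mul_one, one_mul, Pi.smul_apply, MulOpposite.op_one, one_smul,
      Matrix.col_apply]
    ring
  have hXs : X a2 a1 = X a1 a2 := by
    have h5 := congrFun (congrFun hXsymm a1) a2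
    simpa [Matrix.transpose_apply] using h5
  have yw : y ⬝ᵥ w = z u - z v := by
    rw [hwsingle, dotProduct_sub, dotProduct_single, dotProduct_single]
    rw [hy, ha1, ha2]
    simp
  have hzval : ∀ x : V2, z x = 2 * (H x u - H x v) := by
    intro x
    rw [hz]
    rw [hw0, Matrix.mulVec_sub, Matrix.mulVec_single, Matrix.mulVec_single]
    simp
  have hHuv : H v u = H u v := by
    have h6 := congrFun (congrFun hHsymm u) v
    simpa [Matrix.transpose_apply] using h6
  have hfinal : X a1 a1 + X a2 a2 - 2 * X a1 a2 = z u - z v := by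
    have := lhs_eq.symm.trans (key.trans yw)
    rw [hXs] at this
    linarith
  rw [ha1, ha2] at hfinal
  rw [hfinal]
  simp only [Matrix.kroneckerMap_apply, Matrix.smul_apply, Matrix.one_apply_eq, smul_eq_mul,
    mul_one]
  rw [hzval u, hzval v]
  rw [hHuv]
  ring
end
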